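/- arXiv:2410.10324 — 7 statements merged into one kernel-verified Lean document; each statement's English description precedes it below -/
import Mathlib

section
/- If an LP allocates w = sqrt(f*Vol*TVL/r_s) - TVL to a pool with current TVL and fee income f*Vol, then the resulting return of the pool after this allocation equals f*Vol/(TVL + w) = sqrt(r(0)) * sqrt(r_s), where r(0) = f*Vol/TVL. In particular, the post-allocation return is the geometric mean of the pre-allocation return and the staking rate, and is independent of W. -/
theorem div_sqrt_mul_div_eq_sqrt_div_mul_sqrt {x r : ℝ} (T : ℝ) (hx : 0 ≤ x) (hr : 0 ≤ r) :
    x / √(x * T / r) = √(x / T) * √r := by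
  rw [mul_div_assoc, Real.sqrt_mul hx, ← div_div, Real.div_sqrt, ← Real.sqrt_div hx,
    div_div_eq_mul_div, mul_div_right_comm, Real.sqrt_mul' _ hr]

theorem stmt_5_general (f Vol TVL rs : ℝ) (hf : 0 < f) (hVol : 0 < Vol)
    (hrs : 0 < rs)
    (w : ℝ) (hw : w = Real.sqrt (f * Vol * TVL / rs) - TVL) :
    f * Vol / (TVL + w) = Real.sqrt (f * Vol / TVL) * Real.sqrt rs := by
  rw [show TVL + w = √(f * Vol * TVL / rs) by rw [hw]; ring]
  exact div_sqrt_mul_div_eq_sqrt_div_mul_sqrt TVL (mul_pos hf hVol).le hrs.le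

/-- After allocating `w = √(f*Vol*TVL/rs) - TVL`, the pool return
`f*Vol/(TVL+w)` equals `√(r(0)) * √(rs)`, the geometric mean of the
pre-allocation return `r(0) = f*Vol/TVL` and the staking rate. -/
theorem stmt_5 (f Vol TVL rs : ℝ) (hf : 0 < f) (hVol : 0 < Vol)
    (hTVL : 0 < TVL) (hrs : 0 < rs) (hge : rs ≤ f * Vol / TVL)
    (w : ℝ) (hw : w = Real.sqrt (f * Vol * TVL / rs) - TVL) :
    f * Vol / (TVL + w) = Real.sqrt (f * Vol / TVL) * Real.sqrt rs :=
  stmt_5_general f Vol TVL rs hf hVol hrs w hw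
end

section
/- Suppose n pools have pre-allocation returns r_i(0) = f*Vol_i/TVL_i ≥ r_s for all i, and an LP allocates w_i = TVL_i*(sqrt(r_i(0)/r_s) - 1) to each pool. Then after allocation, the marginal return f*Vol_i*TVL_i/(TVL_i + w_i)^2 equals r_s for every pool i. -/
/-- With the optimal allocations `wᵢ = TVLᵢ*(√(rᵢ(0)/rs) - 1)`, every pool's
marginal return `f*Volᵢ*TVLᵢ/(TVLᵢ+wᵢ)²` equals the staking rate `rs`. -/
theorem stmt_10 (n : ℕ) (f rs : ℝ) (Vol TVL : Fin n → ℝ)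
    (hf : 0 < f) (hrs : 0 < rs) (hVol : ∀ i, 0 < Vol i) (hTVL : ∀ i, 0 < TVL i)
    (hge : ∀ i, rs ≤ f * Vol i / TVL i)
    (w : Fin n → ℝ)
    (hw : ∀ i, w i = TVL i * (Real.sqrt ((f * Vol i / TVL i) / rs) - 1)) :
    ∀ i, f * Vol i * TVL i / (TVL i + w i) ^ 2 = rs := by
  intro i
  have hT := hTVL i
  have harg : 0 ≤ (f * Vol i / TVL i) / rs :=
    div_nonneg (le_of_lt (div_pos (mul_pos hf (hVol i)) hT)) hrs.le
  have hs : Real.sqrt ((f * Vol i / TVL i) / rs) ^ 2 = (f * Vol i / TVL i) / rs :=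
    Real.sq_sqrt harg
  have hsum : TVL i + w i = TVL i * Real.sqrt ((f * Vol i / TVL i) / rs) := by
    rw [hw i]; ring
  rw [hsum, mul_pow, hs]
  field_simp [hf.ne', (hVol i).ne', hT.ne']
end

section
/- The total optimal earnings of the LP, r_s*w_0 + sum_{i=1}^n f*Vol_i*w_i/(TVL_i + w_i) with w_i = TVL_i*(sqrt(r_i(0)/r_s) - 1) and w_0 = W - sum w_i, equals r_s*W + sum_{i=1}^n TVL_i*(sqrt(r_i(0)) - sqrt(r_s))^2. -/
/-- The stake maximising `r * T * w / (T + w) - s * w`, the earnings of adding `w` to a pool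
of size `T` with fee rate `r` (relative to `T`) rather than staking it at rate `s`. -/
noncomputable def optimalStake (T r s : ℝ) : ℝ := T * (Real.sqrt (r / s) - 1)

/-- With `a = √r`, `b = √s`, the optimal stake is `w = T (a - b) / b` and `T + w = T a / b`,
so the pool earns `a b w`, which exceeds the staking return `b² w` by `T (a - b)²`. -/
theorem optimalStake_earnings_sub_staking {T r s : ℝ} (hT : T ≠ 0) (hr : 0 < r) (hs : 0 < s) :
    r * T * optimalStake T r s / (T + optimalStake T r s) - s * optimalStake T r s
      = T * (Real.sqrt r - Real.sqrt s) ^ 2 := by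
  have hsqrt_r : 0 < Real.sqrt r := Real.sqrt_pos.2 hr
  have hsqrt_s : 0 < Real.sqrt s := Real.sqrt_pos.2 hs
  have hsize : T + optimalStake T r s = T * (Real.sqrt r / Real.sqrt s) := by
    rw [optimalStake, Real.sqrt_div' r hs.le]; ring
  rw [hsize, optimalStake, Real.sqrt_div' r hs.le]
  field_simp
  linear_combination (-(Real.sqrt r - Real.sqrt s) * Real.sqrt s) * Real.sq_sqrt hr.le
    + ((Real.sqrt r - Real.sqrt s) * Real.sqrt r) * Real.sq_sqrt hs.le

theorem stmt_11_general (n : ℕ) (f rs W : ℝ) (Vol TVL : Fin n → ℝ)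
    (hrs : 0 < rs)
    (hTVL : ∀ i, 0 < TVL i)
    (hge : ∀ i, rs ≤ f * Vol i / TVL i)
    (w : Fin n → ℝ)
    (hw : ∀ i, w i = TVL i * (Real.sqrt ((f * Vol i / TVL i) / rs) - 1))
    (w0 : ℝ) (hw0 : w0 = W - ∑ i, w i) :
    rs * w0 + ∑ i, f * Vol i * w i / (TVL i + w i)
      = rs * W + ∑ i, TVL i * (Real.sqrt (f * Vol i / TVL i) - Real.sqrt rs) ^ 2 := by
  have hpool : ∀ i, f * Vol i * w i / (TVL i + w i)
      = rs * w i + TVL i * (Real.sqrt (f * Vol i / TVL i) - Real.sqrt rs) ^ 2 := by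
    intro i
    have h := optimalStake_earnings_sub_staking (hTVL i).ne' (hrs.trans_le (hge i)) hrs
    have hwi : w i = optimalStake (TVL i) (f * Vol i / TVL i) rs := hw i
    rw [div_mul_cancel₀ _ (hTVL i).ne', ← hwi] at h
    linarith
  rw [hw0, Finset.sum_congr rfl fun i _ => hpool i, Finset.sum_add_distrib, ← Finset.mul_sum]
  ring

/-- The optimal total earnings equal the staking return on all wealth plus a
premium `TVLᵢ*(√(rᵢ(0)) - √rs)²` from each pool. -/
theorem stmt_11 (n : ℕ) (f rs W : ℝ) (Vol TVL : Fin n → ℝ)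
    (hf : 0 < f) (hrs : 0 < rs) (hW : 0 < W)
    (hVol : ∀ i, 0 < Vol i) (hTVL : ∀ i, 0 < TVL i)
    (hge : ∀ i, rs ≤ f * Vol i / TVL i)
    (w : Fin n → ℝ)
    (hw : ∀ i, w i = TVL i * (Real.sqrt ((f * Vol i / TVL i) / rs) - 1))
    (w0 : ℝ) (hw0 : w0 = W - ∑ i, w i) (hw0pos : 0 ≤ w0) :
    rs * w0 + ∑ i, f * Vol i * w i / (TVL i + w i)
      = rs * W + ∑ i, TVL i * (Real.sqrt (f * Vol i / TVL i) - Real.sqrt rs) ^ 2 :=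
  stmt_11_general n f rs W Vol TVL hrs hTVL hge w hw w0 hw0
end

section
/- With the optimal allocation, the LP's total earnings exceed pure staking earnings r_s*W by sum_{i=1}^n TVL_i*(sqrt(r_i(0)) - sqrt(r_s))^2 ≥ 0, with equality if and only if r_i(0) = r_s for all i. -/
open Finset Real

/-- With `r = a / T`, the deposit `w = T (√(r/rs) - 1)` makes `T + w = T √r / √rs`, so the fee
income `a w / (T + w)` equals `√r √rs w`. -/
lemma fee_income_sub_staking_at_optimal_deposit {a T rs : ℝ} (ha : 0 < a) (hT : 0 < T)
    (hrs : 0 < rs) :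
    a * (T * (√(a / T / rs) - 1)) / (T + T * (√(a / T / rs) - 1))
      - rs * (T * (√(a / T / rs) - 1)) = T * (√(a / T) - √rs) ^ 2 := by
  set r := a / T
  have hr0 : 0 < r := div_pos ha hT
  have ha_eq : a = r * T := (div_mul_cancel₀ a hT.ne').symm
  have hsr : 0 < √r := sqrt_pos.mpr hr0
  have hsrs : 0 < √rs := sqrt_pos.mpr hrs
  have hshare : T + T * (√r / √rs - 1) = T * √r / √rs := by
    field_simp
    ring
  rw [sqrt_div hr0.le, hshare, ha_eq]
  field_simp
  linear_combination (√r * (√r - √rs)) * mul_self_sqrt hrs.le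
    - (√rs * (√r - √rs)) * mul_self_sqrt hr0.le

lemma sum_mul_sqrt_sub_sq_eq_zero_iff {ι : Type*} (s : Finset ι) {T r : ι → ℝ} {c : ℝ}
    (hT : ∀ i ∈ s, 0 < T i) (hr : ∀ i ∈ s, 0 ≤ r i) (hc : 0 ≤ c) :
    ∑ i ∈ s, T i * (√(r i) - √c) ^ 2 = 0 ↔ ∀ i ∈ s, r i = c := by
  rw [sum_eq_zero_iff_of_nonneg fun i hi => mul_nonneg (hT i hi).le (sq_nonneg _)]
  refine forall₂_congr fun i hi => ?_
  rw [mul_eq_zero, or_iff_right (hT i hi).ne', sq_eq_zero_iff, sub_eq_zero,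
    sqrt_inj (hr i hi) hc]

theorem stmt_12_general (n : ℕ) (f rs W : ℝ) (Vol TVL : Fin n → ℝ)
    (hf : 0 < f) (hrs : 0 < rs)
    (hVol : ∀ i, 0 < Vol i) (hTVL : ∀ i, 0 < TVL i)
    (w : Fin n → ℝ)
    (hw : ∀ i, w i = TVL i * (Real.sqrt ((f * Vol i / TVL i) / rs) - 1))
    (w0 : ℝ) (hw0 : w0 = W - ∑ i, w i) :
    rs * w0 + ∑ i, f * Vol i * w i / (TVL i + w i)
      = rs * W + ∑ i, TVL i * (Real.sqrt (f * Vol i / TVL i) - Real.sqrt rs) ^ 2 ∧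
    0 ≤ ∑ i, TVL i * (Real.sqrt (f * Vol i / TVL i) - Real.sqrt rs) ^ 2 ∧
    ((∑ i, TVL i * (Real.sqrt (f * Vol i / TVL i) - Real.sqrt rs) ^ 2) = 0
      ↔ ∀ i, f * Vol i / TVL i = rs) := by
  have hfee : ∀ i, 0 < f * Vol i := fun i => mul_pos hf (hVol i)
  have hexcess : ∀ i, f * Vol i * w i / (TVL i + w i)
      = rs * w i + TVL i * (√(f * Vol i / TVL i) - √rs) ^ 2 := fun i => by
    rw [← fee_income_sub_staking_at_optimal_deposit (hfee i) (hTVL i) hrs, ← hw i]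
    ring
  refine ⟨?_, sum_nonneg fun i _ => mul_nonneg (hTVL i).le (sq_nonneg _), ?_⟩
  · rw [sum_congr rfl fun i _ => hexcess i, sum_add_distrib, ← mul_sum, hw0]
    ring
  · simpa using sum_mul_sqrt_sub_sq_eq_zero_iff univ (fun i _ => hTVL i)
      (fun i _ => (div_pos (hfee i) (hTVL i)).le) hrs.le

/-- The optimal earnings exceed pure staking `rs*W` by
`∑ TVLᵢ*(√(rᵢ(0)) - √rs)² ≥ 0`, with equality iff `rᵢ(0) = rs` for all `i`. -/
theorem stmt_12 (n : ℕ) (f rs W : ℝ) (Vol TVL : Fin n → ℝ)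
    (hf : 0 < f) (hrs : 0 < rs) (hW : 0 < W)
    (hVol : ∀ i, 0 < Vol i) (hTVL : ∀ i, 0 < TVL i)
    (hge : ∀ i, rs ≤ f * Vol i / TVL i)
    (w : Fin n → ℝ)
    (hw : ∀ i, w i = TVL i * (Real.sqrt ((f * Vol i / TVL i) / rs) - 1))
    (w0 : ℝ) (hw0 : w0 = W - ∑ i, w i) (hw0pos : 0 ≤ w0) :
    rs * w0 + ∑ i, f * Vol i * w i / (TVL i + w i)
      = rs * W + ∑ i, TVL i * (Real.sqrt (f * Vol i / TVL i) - Real.sqrt rs) ^ 2 ∧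
    0 ≤ ∑ i, TVL i * (Real.sqrt (f * Vol i / TVL i) - Real.sqrt rs) ^ 2 ∧
    ((∑ i, TVL i * (Real.sqrt (f * Vol i / TVL i) - Real.sqrt rs) ^ 2) = 0
      ↔ ∀ i, f * Vol i / TVL i = rs) :=
  stmt_12_general n f rs W Vol TVL hf hrs hVol hTVL w hw w0 hw0
end

section
/- Let r(0) > 0 and r_s > 0, and define the sequential returns r^j by the geometric-mean recursion r^j = sqrt(r^{j-1}*r_s). The cumulative capital absorbed by the pool after m LPs, sum of w^j where w^j = TVL^{j-1}*(sqrt(r^{j-1}/r_s) - 1) and TVL^j = TVL^{j-1} + w^j, satisfies TVL^m = f*Vol/r^m, hence TVL^m converges to f*Vol/r_s as m → ∞. -/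
/-!
Writing `L = f * Vol / rs`, one investment step takes `TVL` to `TVL * √(L / TVL) = √(TVL * L)`,
the geometric mean of `TVL` and `L`. Hence `log (TVL m / L)` halves at every step, so it is
`log (T0 / L) / 2 ^ m → 0`, and `TVL m → L`.
-/

open Filter Topology Real

lemma mul_sqrt_div_self {T : ℝ} (hT : 0 ≤ T) (L : ℝ) : T * √(L / T) = √(T * L) := by
  rcases hT.eq_or_lt with rfl | hT
  · simp
  · rw [← sqrt_sq hT.le, ← sqrt_mul (sq_nonneg T), sqrt_sq hT.le]
    congr 1
    field_simp

lemma sqrt_mul_rec_of_mul_sqrt_div_rec {L : ℝ} {x : ℕ → ℝ} (hx0 : 0 ≤ x 0)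
    (hx : ∀ n, x (n + 1) = x n * √(L / x n)) (n : ℕ) : x (n + 1) = √(x n * L) := by
  have hnonneg : ∀ n, 0 ≤ x n := by
    intro n
    induction n with
    | zero => exact hx0
    | succ n ih => rw [hx n]; positivity
  rw [hx n, mul_sqrt_div_self (hnonneg n)]

section GeometricMeanIteration

variable {L : ℝ} {x : ℕ → ℝ}

lemma pos_of_sqrt_mul_rec
    (hL : 0 < L) (hx0 : 0 < x 0) (hx : ∀ n, x (n + 1) = √(x n * L)) (n : ℕ) :
    0 < x n := by
  induction n with
  | zero => exact hx0
  | succ n ih => rw [hx n]; positivity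

lemma log_div_of_sqrt_mul_rec
    (hL : 0 < L) (hx0 : 0 < x 0) (hx : ∀ n, x (n + 1) = √(x n * L)) (n : ℕ) :
    log (x n / L) = log (x 0 / L) / 2 ^ n := by
  induction n with
  | zero => simp
  | succ n ih =>
    have hxn := pos_of_sqrt_mul_rec hL hx0 hx n
    have hhalf : log (x (n + 1) / L) = log (x n / L) / 2 := by
      rw [hx n, log_div (sqrt_pos.2 (by positivity)).ne' hL.ne', log_sqrt (by positivity),
        log_mul hxn.ne' hL.ne', log_div hxn.ne' hL.ne']
      ring
    rw [hhalf, ih, pow_succ, div_div]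

lemma tendsto_of_sqrt_mul_rec
    (hL : 0 < L) (hx0 : 0 < x 0) (hx : ∀ n, x (n + 1) = √(x n * L)) :
    Tendsto x atTop (𝓝 L) := by
  have hlog : Tendsto (fun n => log (x n / L)) atTop (𝓝 0) := by
    have hpow := (tendsto_pow_atTop_nhds_zero_of_lt_one (by norm_num) (by norm_num :
      (2 : ℝ)⁻¹ < 1)).const_mul (log (x 0 / L))
    rw [mul_zero] at hpow
    refine hpow.congr fun n => ?_
    rw [log_div_of_sqrt_mul_rec hL hx0 hx n, inv_pow, ← div_eq_mul_inv]
  have hexp := ((continuous_exp.tendsto 0).comp hlog).const_mul L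
  rw [exp_zero, mul_one] at hexp
  refine hexp.congr fun n => ?_
  rw [Function.comp_apply, exp_log (div_pos (pos_of_sqrt_mul_rec hL hx0 hx n) hL)]
  field_simp

end GeometricMeanIteration

theorem stmt_15_general (f Vol T0 rs : ℝ) (hf : 0 < f) (hVol : 0 < Vol)
    (hT0 : 0 < T0) (hrs : 0 < rs)
    (TVL r : ℕ → ℝ) (h0 : TVL 0 = T0)
    (hr : ∀ j, r j = f * Vol / TVL j)
    (hrec : ∀ j, TVL (j + 1) = TVL j + TVL j * (Real.sqrt (r j / rs) - 1)) :
    (∀ m, TVL m = f * Vol / r m) ∧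
    Filter.Tendsto TVL Filter.atTop (nhds (f * Vol / rs)) := by
  have hfVol : 0 < f * Vol := mul_pos hf hVol
  have hstep : ∀ j, TVL (j + 1) = TVL j * √(f * Vol / rs / TVL j) := by
    intro j
    rw [hrec j, hr j, div_right_comm]
    ring
  refine ⟨fun m => by rw [hr m, div_div_cancel₀ hfVol.ne'], ?_⟩
  rw [← h0] at hT0
  exact tendsto_of_sqrt_mul_rec (by positivity) hT0
    (sqrt_mul_rec_of_mul_sqrt_div_rec hT0.le hstep)

/-- Sequential optimal investments: the pool's TVL satisfies
`TVL m = f*Vol / r m` after each step, and converges to `f*Vol/rs`. -/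
theorem stmt_15 (f Vol T0 rs : ℝ) (hf : 0 < f) (hVol : 0 < Vol)
    (hT0 : 0 < T0) (hrs : 0 < rs) (hge : rs ≤ f * Vol / T0)
    (TVL r : ℕ → ℝ) (h0 : TVL 0 = T0)
    (hr : ∀ j, r j = f * Vol / TVL j)
    (hrec : ∀ j, TVL (j + 1) = TVL j + TVL j * (Real.sqrt (r j / rs) - 1)) :
    (∀ m, TVL m = f * Vol / r m) ∧
    Filter.Tendsto TVL Filter.atTop (nhds (f * Vol / rs)) :=
  stmt_15_general f Vol T0 rs hf hVol hT0 hrs TVL r h0 hr hrec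
end

section
/- For a constant product AMM at staking equilibrium (TVL = f*Vol/r_s, reserves 2x = TVL), the total swap cost f*Δx + (Δx/x)*Δx for a trade of size Δx equals Δx*(f + 2*r_s*Δx/(f*Vol)); this is minimized over the fee tier f > 0 (holding Vol fixed) at f = sqrt(2*r_s*Δx/Vol). -/
/-!
At equilibrium the price impact `Δx / x` equals `2 rs Δx / (f Vol)`, so the cost per unit traded
is `f + c / f` with `c = 2 rs Δx / Vol`. By AM-GM, `f + c / f ≥ 2 √c`, with equality at `f = √c`.
-/

open Set

theorem two_mul_sqrt_le_add_div {c f : ℝ} (hc : 0 ≤ c) (hf : 0 < f) :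
    2 * √c ≤ f + c / f := by
  have hsq : 2 * √c * f ≤ f ^ 2 + c := by
    nlinarith [sq_nonneg (f - √c), Real.sq_sqrt hc]
  rw [add_div' _ _ _ hf.ne', le_div_iff₀ hf]
  linarith

theorem isMinOn_add_div_Ioi {c : ℝ} (hc : 0 ≤ c) :
    IsMinOn (fun f => f + c / f) (Ioi 0) √c := fun f hf => by
  change √c + c / √c ≤ f + c / f
  rw [Real.div_sqrt, ← two_mul]
  exact two_mul_sqrt_le_add_div hc hf

theorem swapCost_eq_of_equilibrium (f Δx Vol rs : ℝ) :
    f * Δx + (Δx / (f * Vol / (2 * rs))) * Δx = Δx * (f + 2 * rs * Δx / (f * Vol)) := by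
  rw [div_div_eq_mul_div]
  ring

/-- At staking equilibrium `x = f*Vol/(2*rs)`, the total swap cost
`f*Δx + (Δx/x)*Δx` equals `Δx*(f + 2*rs*Δx/(f*Vol))`, and the latter is
minimized over fee tiers `f > 0` at `f = √(2*rs*Δx/Vol)`. -/
theorem stmt_17 (Δx Vol rs : ℝ) (hΔx : 0 < Δx) (hVol : 0 < Vol) (hrs : 0 < rs) :
    (∀ f : ℝ, 0 < f → ∀ x : ℝ, x = f * Vol / (2 * rs) →
      f * Δx + (Δx / x) * Δx = Δx * (f + 2 * rs * Δx / (f * Vol))) ∧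
    IsMinOn (fun f => Δx * (f + 2 * rs * Δx / (f * Vol))) (Set.Ioi 0)
      (Real.sqrt (2 * rs * Δx / Vol)) := by
  refine ⟨fun f _ x hx => hx ▸ swapCost_eq_of_equilibrium f Δx Vol rs, ?_⟩
  have hcost : (fun f => Δx * (f + 2 * rs * Δx / (f * Vol))) =
      fun f => Δx * (f + 2 * rs * Δx / Vol / f) := by
    funext f
    rw [mul_comm f, ← div_div]
  rw [hcost]
  exact (isMinOn_add_div_Ioi (by positivity)).comp_mono (monotone_mul_left_of_nonneg hΔx.le)
end

section
/- Given two pools with parameters (Vol_1, TVL_1) and (Vol_2, TVL_2), fee f, and r_1(0) > r_2(0) ≥ r_s, the optimal allocations satisfy w_1/TVL_1 > w_2/TVL_2; i.e., the pool with higher pre-allocation return receives a larger allocation relative to its TVL. -/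
/-- If `r₁(0) > r₂(0) ≥ rs`, the optimal allocations satisfy
`w₁/TVL₁ > w₂/TVL₂`. -/
theorem stmt_19 (f rs Vol₁ TVL₁ Vol₂ TVL₂ : ℝ)
    (hf : 0 < f) (hrs : 0 < rs)
    (hV1 : 0 < Vol₁) (hT1 : 0 < TVL₁) (hV2 : 0 < Vol₂) (hT2 : 0 < TVL₂)
    (h21 : f * Vol₂ / TVL₂ < f * Vol₁ / TVL₁)
    (h2s : rs ≤ f * Vol₂ / TVL₂)
    (w₁ w₂ : ℝ)
    (hw1 : w₁ = TVL₁ * (Real.sqrt ((f * Vol₁ / TVL₁) / rs) - 1))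
    (hw2 : w₂ = TVL₂ * (Real.sqrt ((f * Vol₂ / TVL₂) / rs) - 1)) :
    w₂ / TVL₂ < w₁ / TVL₁ := by
  rw [hw1, hw2, mul_div_cancel_left₀ _ hT1.ne', mul_div_cancel_left₀ _ hT2.ne']
  have h := Real.sqrt_lt_sqrt (by positivity) (by gcongr : (f * Vol₂ / TVL₂) / rs < (f * Vol₁ / TVL₁) / rs)
  linarith
end
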